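/- arXiv:2501.00344 — 2 statements merged into one kernel-verified Lean document; each statement's English description precedes it below -/
import Mathlib

section
/- Fix ν > 0, let g(x) = ((3/2)x + ν^{3/2})^{2/3} − ν, and for k ∈ ℕ define p_k(x) = ν · (1/k!) · (log√((ν + g(x))/ν))^k. Define the operator I on continuous functions f : [0,∞) → [0,∞) by I(f)(x) = (1/2)·∫₀^x f(ℓ)/(ν + g(ℓ))^{3/2} dℓ. Then I(p_k) = p_{k+1} for every k ∈ ℕ. -/
/-!
With `u(x) = (3/2)x + ν^{3/2}` one has `ν + g = u^{2/3}`, so `(ν + g)^{3/2} = u` and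
`L := log √((ν + g)/ν) = (log u)/3 - (log ν)/2`, which vanishes at `0` and satisfies `L' = 1/(2u)`.
Hence `p_k = ν L^k/k!` and the integrand of `I(p_k)` is `ν L^k/k! · L'`, whose primitive
vanishing at `0` is `ν L^{k+1}/(k+1)! = p_{k+1}`.
-/

open Real MeasureTheory Set

section PowDivFactorial

variable {L : ℝ → ℝ} {L' : ℝ} {x : ℝ}

theorem HasDerivAt.pow_succ_div_factorial_succ (hL : HasDerivAt L L' x) (k : ℕ) :
    HasDerivAt (fun y => L y ^ (k + 1) / (k + 1).factorial) (L x ^ k / k.factorial * L') x := by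
  refine ((hL.pow (k + 1)).div_const ((k + 1).factorial : ℝ)).congr_deriv ?_
  rw [Nat.factorial_succ, Nat.add_sub_cancel]
  push_cast
  field_simp

theorem intervalIntegral.integral_pow_div_factorial_mul_deriv {L L' : ℝ → ℝ} {a b : ℝ}
    (hL : ∀ y ∈ uIcc a b, HasDerivAt L (L' y) y) (hL' : ContinuousOn L' (uIcc a b)) (k : ℕ) :
    ∫ y in a..b, L y ^ k / k.factorial * L' y =
      L b ^ (k + 1) / (k + 1).factorial - L a ^ (k + 1) / (k + 1).factorial := by
  have hLcont : ContinuousOn L (uIcc a b) := fun y hy => (hL y hy).continuousAt.continuousWithinAt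
  refine integral_eq_sub_of_hasDerivAt (fun y hy => (hL y hy).pow_succ_div_factorial_succ k) ?_
  exact (((hLcont.pow k).div_const _).mul hL').intervalIntegrable

end PowDivFactorial

section Flow

variable {ν x : ℝ}

/-- `(ν + g x)^{3/2}`, for the explicit solution `g` of `g' = 1/√(ν + g)`, `g 0 = 0`. -/
noncomputable def flowBase (ν x : ℝ) : ℝ := 3 / 2 * x + ν ^ ((3 : ℝ) / 2)

/-- `log √((ν + g x)/ν)`. -/
noncomputable def flowLog (ν x : ℝ) : ℝ := Real.log (flowBase ν x) / 3 - Real.log ν / 2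

theorem flowBase_pos (hν : 0 < ν) (hx : 0 ≤ x) : 0 < flowBase ν x := by
  unfold flowBase
  have := rpow_pos_of_pos hν ((3 : ℝ) / 2)
  positivity

theorem rpow_two_thirds_rpow_three_halves {u : ℝ} (hu : 0 ≤ u) :
    (u ^ ((2 : ℝ) / 3)) ^ ((3 : ℝ) / 2) = u := by
  rw [← rpow_mul hu]
  norm_num

theorem log_sqrt_flowBase_rpow_div (hν : 0 < ν) (hx : 0 < flowBase ν x) :
    Real.log (√(flowBase ν x ^ ((2 : ℝ) / 3) / ν)) = flowLog ν x := by
  have hpos : 0 < flowBase ν x ^ ((2 : ℝ) / 3) := rpow_pos_of_pos hx _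
  rw [log_sqrt (by positivity), log_div hpos.ne' hν.ne', log_rpow hx, flowLog]
  ring

theorem flowLog_zero (hν : 0 < ν) : flowLog ν 0 = 0 := by
  rw [flowLog, flowBase, mul_zero, zero_add, log_rpow hν]
  ring

theorem hasDerivAt_flowLog (hx : 0 < flowBase ν x) :
    HasDerivAt (flowLog ν) (1 / (2 * flowBase ν x)) x := by
  have hbase : HasDerivAt (flowBase ν) (3 / 2) x :=
    (((hasDerivAt_id x).const_mul (3 / 2 : ℝ)).add_const _).congr_deriv (mul_one _)
  refine (((hbase.log hx.ne').div_const 3).sub_const (Real.log ν / 2)).congr_deriv ?_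
  field_simp

theorem continuousOn_one_div_two_mul_flowBase {s : Set ℝ} (hs : ∀ y ∈ s, 0 < flowBase ν y) :
    ContinuousOn (fun y => 1 / (2 * flowBase ν y)) s := by
  refine continuousOn_const.div (Continuous.continuousOn ?_) fun y hy => by
    have := hs y hy
    positivity
  unfold flowBase
  fun_prop

end Flow

theorem stmt5 (ν : ℝ) (hν : 0 < ν) (g : ℝ → ℝ)
    (hg : ∀ x, g x = ((3 / 2) * x + ν ^ ((3 : ℝ) / 2)) ^ ((2 : ℝ) / 3) - ν)
    (p : ℕ → ℝ → ℝ)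
    (hp : ∀ k x, p k x = ν * (1 / (Nat.factorial k : ℝ)) *
        (Real.log (Real.sqrt ((ν + g x) / ν))) ^ k)
    (I : (ℝ → ℝ) → ℝ → ℝ)
    (hI : ∀ f x, I f x =
        (1 / 2) * ∫ ℓ in Set.Ioc (0 : ℝ) x, f ℓ / (ν + g ℓ) ^ ((3 : ℝ) / 2)) :
    ∀ k : ℕ, ∀ x, 0 ≤ x → I (p k) x = p (k + 1) x := by
  intro k x hx
  have hg' : ∀ ℓ, ν + g ℓ = flowBase ν ℓ ^ ((2 : ℝ) / 3) := fun ℓ => by rw [hg, flowBase]; ring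
  have hbase : ∀ ℓ ∈ uIcc 0 x, 0 < flowBase ν ℓ := fun ℓ hℓ =>
    flowBase_pos hν (by rw [uIcc_of_le hx] at hℓ; exact hℓ.1)
  rw [hI, ← intervalIntegral.integral_of_le hx]
  calc (1 / 2) * ∫ ℓ in (0 : ℝ)..x, p k ℓ / (ν + g ℓ) ^ ((3 : ℝ) / 2)
      = ν * ∫ ℓ in (0 : ℝ)..x, flowLog ν ℓ ^ k / k.factorial * (1 / (2 * flowBase ν ℓ)) := by
        rw [← intervalIntegral.integral_const_mul, ← intervalIntegral.integral_const_mul]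
        refine intervalIntegral.integral_congr fun ℓ hℓ => ?_
        simp only [hp, hg', rpow_two_thirds_rpow_three_halves (hbase ℓ hℓ).le,
          log_sqrt_flowBase_rpow_div hν (hbase ℓ hℓ)]
        ring
    _ = ν * (flowLog ν x ^ (k + 1) / (k + 1).factorial -
          flowLog ν 0 ^ (k + 1) / (k + 1).factorial) := by
        rw [intervalIntegral.integral_pow_div_factorial_mul_deriv
          (fun ℓ hℓ => hasDerivAt_flowLog (hbase ℓ hℓ))
          (continuousOn_one_div_two_mul_flowBase hbase)]
    _ = p (k + 1) x := by
        rw [flowLog_zero hν, hp, hg', log_sqrt_flowBase_rpow_div hν (flowBase_pos hν hx)]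
        ring
end

section
/- There is an absolute constant C such that for all ν ∈ (0,1], A > 0 and M ≥ 0: ∫_{ℝ²} 1_{{ν^{1/2}|q₁| ≤ A}} / (A² + ν·q₁² + q₂² + M·ν·q₁²) dq ≤ C · ν^{-1/2} · (1 ∨ log(1+M)) / (1 ∨ M^{1/2}). -/
/-!
Integrating out `q₂` (a Cauchy integral) leaves `π / √(A² + k² q₁²)` with `k = √((1 + M) ν)`,
whose integral over `|q₁| ≤ A / √ν` is exactly `2π arsinh(√(1 + M)) / k`, the endpoint
`k A / √ν / A = √(1 + M)` being independent of `A` and `ν`. The bound then follows from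
`arsinh t ≤ log (3 t)` and `√(1 + M) ≥ max 1 √M`.
-/

open MeasureTheory Real Set

theorem integral_prod_of_nonneg {α β : Type*} [MeasurableSpace α] [MeasurableSpace β]
    {μ : Measure α} {ν : Measure β} [SFinite μ] [SFinite ν] {F : α × β → ℝ} (hF0 : 0 ≤ F)
    (hF : AEStronglyMeasurable F (μ.prod ν)) (hsec : ∀ᵐ x ∂μ, Integrable (fun y ↦ F (x, y)) ν)
    (hint : Integrable (fun x ↦ ∫ y, F (x, y) ∂ν) μ) :
    ∫ z, F z ∂μ.prod ν = ∫ x, ∫ y, F (x, y) ∂ν ∂μ := by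
  refine integral_prod F ((integrable_prod_iff hF).2 ⟨hsec, ?_⟩)
  simpa only [Real.norm_of_nonneg (hF0 _)] using hint

theorem inv_add_sq_eq_inv_mul {b : ℝ} (hb : 0 < b) (y : ℝ) :
    (b + y ^ 2)⁻¹ = b⁻¹ * (1 + (y / √b) ^ 2)⁻¹ := by
  rw [div_pow, sq_sqrt hb.le, ← mul_inv, mul_add, mul_div_cancel₀ _ hb.ne', mul_one]

theorem integrable_inv_add_sq {b : ℝ} (hb : 0 < b) : Integrable fun y : ℝ ↦ (b + y ^ 2)⁻¹ := by
  simp_rw [inv_add_sq_eq_inv_mul hb]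
  exact (integrable_inv_one_add_sq.comp_div (sqrt_pos.2 hb).ne').const_mul _

theorem integral_inv_add_sq {b : ℝ} (hb : 0 < b) : ∫ y : ℝ, (b + y ^ 2)⁻¹ = π / √b := by
  simp_rw [inv_add_sq_eq_inv_mul hb]
  rw [integral_const_mul, Measure.integral_comp_div (fun y ↦ (1 + y ^ 2)⁻¹),
    integral_univ_inv_one_add_sq, abs_of_pos (sqrt_pos.2 hb), smul_eq_mul]
  have hsqrt : √b ≠ 0 := (sqrt_pos.2 hb).ne'
  nth_rw 1 [← sq_sqrt hb.le]
  field_simp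

theorem integral_indicator_Icc_inv_add_sq {b : ℝ → ℝ} (hb : Continuous b) (hb0 : ∀ x, 0 < b x)
    {l u : ℝ} (hlu : l ≤ u) :
    ∫ q : ℝ × ℝ, (Icc l u).indicator (fun x ↦ (b x + q.2 ^ 2)⁻¹) q.1
      = π * ∫ x in l..u, (√(b x))⁻¹ := by
  have hsec (x : ℝ) : ∫ y, (Icc l u).indicator (fun x ↦ (b x + y ^ 2)⁻¹) x
      = (Icc l u).indicator (fun x ↦ π / √(b x)) x := by
    by_cases hx : x ∈ Icc l u <;> simp [hx, integral_inv_add_sq (hb0 x)]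
  have hsec_int (x : ℝ) : Integrable fun y ↦ (Icc l u).indicator (fun x ↦ (b x + y ^ 2)⁻¹) x := by
    by_cases hx : x ∈ Icc l u <;> simp [hx, integrable_inv_add_sq (hb0 x)]
  have hmeas : Measurable fun q : ℝ × ℝ ↦ (Icc l u).indicator (fun x ↦ (b x + q.2 ^ 2)⁻¹) q.1 :=
    Measurable.indicator (s := Prod.fst ⁻¹' Icc l u) (f := fun q : ℝ × ℝ ↦ (b q.1 + q.2 ^ 2)⁻¹)
      (by fun_prop) (measurableSet_Icc.preimage measurable_fst)
  have hcont : Continuous fun x ↦ π / √(b x) :=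
    continuous_const.div (by fun_prop) fun x ↦ (sqrt_pos.2 (hb0 x)).ne'
  have hint : Integrable fun x ↦ (Icc l u).indicator (fun x ↦ π / √(b x)) x :=
    (hcont.continuousOn.integrableOn_compact isCompact_Icc).integrable_indicator measurableSet_Icc
  rw [Measure.volume_eq_prod, integral_prod_of_nonneg
    (fun q ↦ indicator_nonneg (fun x _ ↦ (inv_pos.2 (by have := hb0 x; positivity)).le) _)
    hmeas.aestronglyMeasurable (.of_forall hsec_int) (by simpa only [hsec] using hint)]
  simp_rw [hsec]
  rw [integral_indicator measurableSet_Icc, integral_Icc_eq_integral_Ioc,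
    ← intervalIntegral.integral_of_le hlu, ← intervalIntegral.integral_const_mul]
  simp only [div_eq_mul_inv]

theorem sqrt_sq_add_sq_eq_mul {a : ℝ} (ha : 0 < a) (y : ℝ) :
    √(a ^ 2 + y ^ 2) = a * √(1 + (y / a) ^ 2) := by
  rw [← sqrt_sq ha.le, ← sqrt_mul (sq_nonneg a), sqrt_sq ha.le, mul_add, mul_one, div_pow,
    mul_div_cancel₀ _ (pow_ne_zero 2 ha.ne')]

theorem intervalIntegral_inv_sqrt_sq_add_mul_sq {a k : ℝ} (ha : 0 < a) (hk : 0 < k) (l u : ℝ) :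
    ∫ x in l..u, (√(a ^ 2 + (k * x) ^ 2))⁻¹ = (arsinh (k * u / a) - arsinh (k * l / a)) / k := by
  rw [sub_div]
  refine intervalIntegral.integral_eq_sub_of_hasDerivAt (f := fun x ↦ arsinh (k * x / a) / k)
    (fun x _ ↦ ?_) (Continuous.intervalIntegrable ?_ _ _)
  · refine ((((hasDerivAt_id' x).const_mul k).div_const a).arsinh.div_const k).congr_deriv ?_
    rw [sqrt_sq_add_sq_eq_mul ha, smul_eq_mul, mul_one]
    field_simp
  · exact continuous_sqrt.comp (by fun_prop) |>.inv₀ fun x ↦ (sqrt_pos.2 (by positivity)).ne'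

theorem arsinh_le_log_three_mul {t : ℝ} (ht : 1 ≤ t) : arsinh t ≤ log (3 * t) := by
  refine log_le_log (by positivity) ?_
  have : √(1 + t ^ 2) ≤ 2 * t := sqrt_le_iff.2 ⟨by positivity, by nlinarith⟩
  linarith

theorem arsinh_sqrt_one_add_le {M : ℝ} (hM : 0 ≤ M) :
    arsinh √(1 + M) ≤ 5 / 2 * max 1 (log (1 + M)) := by
  have h1 : 1 ≤ √(1 + M) := one_le_sqrt.2 (by linarith)
  have hlog3 : log 3 ≤ 2 := by linarith [log_le_sub_one_of_pos (by norm_num : (0 : ℝ) < 3)]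
  calc arsinh √(1 + M) ≤ log (3 * √(1 + M)) := arsinh_le_log_three_mul h1
    _ = log 3 + log (1 + M) / 2 := by
      rw [log_mul (by norm_num) (by positivity), log_sqrt (by linarith)]
    _ ≤ 5 / 2 * max 1 (log (1 + M)) := by
      linarith [le_max_left 1 (log (1 + M)), le_max_right 1 (log (1 + M))]

theorem max_one_sqrt_le_sqrt_one_add {M : ℝ} (hM : 0 ≤ M) : max 1 √M ≤ √(1 + M) :=
  max_le (one_le_sqrt.2 (by linarith)) (sqrt_le_sqrt (by linarith))

theorem ite_strip_eq_indicator {ν A M : ℝ} (hν : 0 < ν) (hM : 0 ≤ M) (x y : ℝ) :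
    (if √ν * |x| ≤ A then 1 / (A ^ 2 + ν * x ^ 2 + y ^ 2 + M * ν * x ^ 2) else 0)
      = (Icc (-(A / √ν)) (A / √ν)).indicator
          (fun x ↦ (A ^ 2 + (√(1 + M) * √ν * x) ^ 2 + y ^ 2)⁻¹) x := by
  have hmem : √ν * |x| ≤ A ↔ x ∈ Icc (-(A / √ν)) (A / √ν) := by
    rw [mem_Icc, ← abs_le, le_div_iff₀ (sqrt_pos.2 hν), mul_comm]
  by_cases hx : x ∈ Icc (-(A / √ν)) (A / √ν)
  · rw [indicator_of_mem hx, if_pos (hmem.2 hx), one_div, mul_pow, mul_pow,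
      sq_sqrt (by linarith), sq_sqrt hν.le]
    ring_nf
  · rw [indicator_of_notMem hx, if_neg (mt hmem.1 hx)]

theorem stmt10 :
    ∃ C : ℝ, 0 < C ∧ ∀ ν A M : ℝ, 0 < ν → ν ≤ 1 → 0 < A → 0 ≤ M →
      (∫ q : ℝ × ℝ,
          if Real.sqrt ν * |q.1| ≤ A then
            1 / (A ^ 2 + ν * q.1 ^ 2 + q.2 ^ 2 + M * ν * q.1 ^ 2)
          else 0)
        ≤ C * (Real.sqrt ν)⁻¹ * max 1 (Real.log (1 + M)) / max 1 (Real.sqrt M) := by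
  refine ⟨20, by norm_num, fun ν A M hν _ hA hM => ?_⟩
  have hsν : 0 < √ν := sqrt_pos.2 hν
  set k := √(1 + M) * √ν
  set L := A / √ν
  have hk : 0 < k := by positivity
  have hkL : k * L / A = √(1 + M) := by
    simp only [k, L]
    field_simp
  simp_rw [ite_strip_eq_indicator hν hM]
  rw [integral_indicator_Icc_inv_add_sq (b := fun x ↦ A ^ 2 + (k * x) ^ 2) (by fun_prop)
    (fun x ↦ by positivity) (neg_le_self (by positivity)),
    intervalIntegral_inv_sqrt_sq_add_mul_sq hA hk, mul_neg, neg_div, arsinh_neg, hkL]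
  have hsk : max 1 √M * √ν ≤ k :=
    mul_le_mul_of_nonneg_right (max_one_sqrt_le_sqrt_one_add hM) hsν.le
  calc π * ((arsinh √(1 + M) - -arsinh √(1 + M)) / k)
      = 2 * π * arsinh √(1 + M) / k := by ring
    _ ≤ 2 * 4 * (5 / 2 * max 1 (log (1 + M))) / (max 1 √M * √ν) := by
      gcongr
      · exact arsinh_nonneg_iff.2 (sqrt_nonneg _)
      · exact pi_le_four
      · exact arsinh_sqrt_one_add_le hM
    _ = 20 * (√ν)⁻¹ * max 1 (log (1 + M)) / max 1 √M := by
      field_simp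
      ring
end
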